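/- The set of 15 rules for changing the selection in the passive memory switch (Table 30 of the paper, rules 338–352) is rotation-consistent. The rules are: (R,BWWWRBBWWW,R), (B,BRWBWWRWWR,B), (R,BRWWWWBWWW,R), (W,BWWWWBRWWW,W), (B,WBRBWWWWRR,B), (B,BRWBRWRWWW,B), (W,WBWWBWBRWW,W), (B,WBRBRWWWRW,R), (B,BRWBWRRWWW,B), (R,WBRBWWWWRW,R), (R,RWWWRBBWWW,R), (B,RRWBWWRWWW,B), (R,BRWWWWRWWW,R), (W,BBRBWWWBWW,W), (B,WWWWBRBWWW,B). -/

import Mathlib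

/-- The three states of the cellular automaton: W (white, quiescent),
B (blue) and R (red). -/
inductive CAState : Type
  | W | B | R
  deriving DecidableEq, Repr

open CAState

/-- A neighbourhood: a word of length 10 over {W,B,R}; positions 0-4
(paper's 1-5) are the side-neighbours, positions 5-9 (paper's 6-10)
the vertex-neighbours. -/
abbrev Nbhd := Fin 10 → CAState

/-- Build a neighbourhood from its ten letters. -/
def nb (a b c d e f g h i j : CAState) : Nbhd := ![a, b, c, d, e, f, g, h, i, j]

/-- The rotation ρ: simultaneous cyclic shift of the side part and of the
vertex part: ρ(x1…x10) = x2x3x4x5x1x7x8x9x10x6. -/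
def rho (n : Nbhd) : Nbhd := fun i => n (![1, 2, 3, 4, 0, 6, 7, 8, 9, 5] i)

/-- Two neighbourhoods are rotation-equivalent if one is ρ^k of the other. -/
def RotEquiv (n m : Nbhd) : Prop := ∃ k : ℕ, n = rho^[k] m

/-- A rule: (current state, neighbourhood, new state). -/
abbrev Rule := CAState × Nbhd × CAState

/-- A set of rules is rotation-consistent if any two rules with the same
current state and rotation-equivalent neighbourhoods have the same new
state. -/
def RotationConsistent (L : List Rule) : Prop :=
  ∀ r₁ ∈ L, ∀ r₂ ∈ L, r₁.1 = r₂.1 → RotEquiv r₁.2.1 r₂.2.1 → r₁.2.2 = r₂.2.2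

/-! Since `ρ⁵ = id`, rotation-equivalence only needs the rotations `ρ^k` with `k < 5`, so it is
decidable and the claim is a finite check over the 15 × 15 pairs of rules. -/

lemma isPeriodicPt_rho_five (n : Nbhd) : Function.IsPeriodicPt rho 5 n := by
  funext i
  fin_cases i <;> rfl

lemma rotEquiv_iff_exists_lt_five {n m : Nbhd} : RotEquiv n m ↔ ∃ k < 5, n = rho^[k] m :=
  ⟨fun ⟨k, hk⟩ => ⟨k % 5, Nat.mod_lt _ (by norm_num), by
      rw [hk, (isPeriodicPt_rho_five m).iterate_mod_apply]⟩,
   fun ⟨k, _, hk⟩ => ⟨k, hk⟩⟩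

instance : DecidableRel RotEquiv := fun _ _ =>
  decidable_of_iff _ rotEquiv_iff_exists_lt_five.symm

instance (L : List Rule) : Decidable (RotationConsistent L) := by
  unfold RotationConsistent; infer_instance

theorem passive_memory_selection_rules_rotation_consistent :
    RotationConsistent [
    (R, nb B W W W R B B W W W, R),
    (B, nb B R W B W W R W W R, B),
    (R, nb B R W W W W B W W W, R),
    (W, nb B W W W W B R W W W, W),
    (B, nb W B R B W W W W R R, B),
    (B, nb B R W B R W R W W W, B),
    (W, nb W B W W B W B R W W, W),
    (B, nb W B R B R W W W R W, R),
    (B, nb B R W B W R R W W W, B),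
    (R, nb W B R B W W W W R W, R),
    (R, nb R W W W R B B W W W, R),
    (B, nb R R W B W W R W W W, B),
    (R, nb B R W W W W R W W W, R),
    (W, nb B B R B W W W B W W, W),
    (B, nb W W W W B R B W W W, B)] := by
  decide
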